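/- For a context-free grammar G and a nonterminal X, the language L_G(X) of terminal strings derivable from X in G equals the image of L(def(X)) under the substitution that maps each terminal symbol a ∈ Σ to {a} and each pseudoterminal Y of def(X) to L_G(Y). -/

import Mathlib

/-!
Infrastructure for the strongly-connected-component decomposition of a
context-free grammar (Pereira & Wright): the graph `conn(G)`, the components
`comp(X)`, the defining subgrammars `def(X)` (with out-of-component
nonterminals treated as pseudoterminals), and language substitution.
-/

namespace LRApprox

open scoped Classical

universe uN uT

variable {T : Type uT}

/-- Context-free grammar with nonterminals in an arbitrary universe `uN`, as in the
older Mathlib (current Mathlib restricts `NT` to `Type`). -/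
structure ContextFreeGrammar.{uN', uT'} (T : Type uT') where
  /-- Type of nonterminals. -/
  NT : Type uN'
  /-- Initial nonterminal. -/
  initial : NT
  /-- Rewrite rules. -/
  rules : Finset (ContextFreeRule T NT)

/-- One step of context-free transformation. -/
def ContextFreeGrammar.Produces (g : ContextFreeGrammar.{uN} T) (u v : List (Symbol T g.NT)) :
    Prop :=
  ∃ r ∈ g.rules, r.Rewrites u v

/-- Any number of steps of context-free transformation. -/
abbrev ContextFreeGrammar.Derives (g : ContextFreeGrammar.{uN} T) :
    List (Symbol T g.NT) → List (Symbol T g.NT) → Prop :=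
  Relation.ReflTransGen g.Produces

/-- Derivable from the initial nonterminal. -/
def ContextFreeGrammar.Generates (g : ContextFreeGrammar.{uN} T) (s : List (Symbol T g.NT)) :
    Prop :=
  g.Derives [Symbol.nonterminal g.initial] s

/-- The language generated by the grammar. -/
def ContextFreeGrammar.language (g : ContextFreeGrammar.{uN} T) : Language T :=
  { w | g.Generates (List.map Symbol.terminal w) }

/-- A CFG is left-linear if every rule has the form `A → Bβ` or `A → β`
with `β` a string of terminals. -/
def LeftLinear (g : ContextFreeGrammar.{uN} T) : Prop :=
  ∀ r ∈ g.rules, (∃ β : List T, r.output = β.map Symbol.terminal) ∨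
    (∃ (B : g.NT) (β : List T), r.output = Symbol.nonterminal B :: β.map Symbol.terminal)

/-- A CFG is right-linear if every rule has the form `A → βB` or `A → β`
with `β` a string of terminals. -/
def RightLinear (g : ContextFreeGrammar.{uN} T) : Prop :=
  ∀ r ∈ g.rules, (∃ β : List T, r.output = β.map Symbol.terminal) ∨
    (∃ (B : g.NT) (β : List T), r.output = β.map Symbol.terminal ++ [Symbol.nonterminal B])

/-- The edge relation of the graph `conn(G)`: an arc from `X` to `Y` whenever
`Y` occurs in the right-hand side of a rule of `G` whose left-hand side is `X`. -/
def ConnStep (g : ContextFreeGrammar.{uN} T) (X Y : g.NT) : Prop :=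
  ∃ r ∈ g.rules, r.input = X ∧ Symbol.nonterminal Y ∈ r.output

/-- `X` and `Y` lie in the same strongly connected component of `conn(G)`. -/
def SameComp (g : ContextFreeGrammar.{uN} T) (X Y : g.NT) : Prop :=
  Relation.ReflTransGen (ConnStep g) X Y ∧ Relation.ReflTransGen (ConnStep g) Y X

/-- Conversion of a symbol of `G` into a symbol of the defining subgrammar
`def(X)`: nonterminals outside `comp(X)` become pseudoterminals. -/
noncomputable def convSym (g : ContextFreeGrammar.{uN} T) (X : g.NT) :
    Symbol T g.NT → Symbol (T ⊕ g.NT) {Y : g.NT // SameComp g X Y}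
  | .terminal t => .terminal (Sum.inl t)
  | .nonterminal Y =>
      if h : SameComp g X Y then .nonterminal ⟨Y, h⟩ else .terminal (Sum.inr Y)

/-- The defining subgrammar `def(X)`: start symbol `X`, nonterminals
`comp(X)`, terminals `Σ` plus the pseudoterminals, and the rules of `G` whose
left-hand side lies in `comp(X)`. -/
noncomputable def defSub (g : ContextFreeGrammar.{uN} T) (X : g.NT) :
    ContextFreeGrammar.{uN} (T ⊕ g.NT) where
  NT := {Y : g.NT // SameComp g X Y}
  initial := ⟨X, Relation.ReflTransGen.refl, Relation.ReflTransGen.refl⟩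
  rules :=
    (g.rules.toList.filterMap fun r =>
      if h : SameComp g X r.input then
        some ⟨⟨r.input, h⟩, r.output.map (convSym g X)⟩
      else none).toFinset

/-- `Y` is a pseudoterminal of `def(X)`: it is not in `comp(X)` but occurs in
the right-hand side of a rule whose left-hand side is in `comp(X)`. -/
def IsPseudo (g : ContextFreeGrammar.{uN} T) (X Y : g.NT) : Prop :=
  ¬ SameComp g X Y ∧
    ∃ r ∈ g.rules, SameComp g X r.input ∧ Symbol.nonterminal Y ∈ r.output

/-- `L_G(X)`: the terminal strings derivable from the nonterminal `X` in `G`. -/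
def langFrom (g : ContextFreeGrammar.{uN} T) (X : g.NT) : Language T :=
  {w : List T | g.Derives [Symbol.nonterminal X] (w.map Symbol.terminal)}

/-- Extension of a substitution `f` from symbols to strings:
`f(c₁…c_n) = f(c₁)⋯f(c_n)`, with `f(ε) = {ε}`. -/
def substStr {α : Type*} {β : Type*} (f : α → Language β) : List α → Language β
  | [] => 1
  | c :: u => f c * substStr f u

/-- Extension of a substitution to a language: `f(L) = ⋃_{u ∈ L} f(u)`. -/
def substLang {α : Type*} {β : Type*} (f : α → Language β) (L : Language α) :
    Language β :=
  ⋃ u ∈ L, substStr f u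

end LRApprox

/-!
Derivations of terminal words are handled through parse forests (`DerivesWord`): a word
derived from `s₁ ⋯ sₙ` splits into words derived from the `sᵢ`, and a word derived from a
nonterminal comes from a rule followed by a derivation from its right-hand side. A forest of
`G` rooted in `comp(X)` becomes a forest of `def(X)` by cutting it at every nonterminal `Y`
outside `comp(X)`; the cut-off subtrees derive words of `L_G(Y)`, which is exactly what the
substitution puts back for the pseudoterminal `Y`. Conversely, grafting derivations of words
of `L_G(Y)` onto the pseudoterminal leaves of a forest of `def(X)` gives a forest of `G`.
-/

namespace LRApprox

universe uN uT

variable {T : Type uT}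

namespace ContextFreeGrammar

variable {g : ContextFreeGrammar.{uN} T}

theorem Derives.append {u u' v v' : List (Symbol T g.NT)} (h : g.Derives u v)
    (h' : g.Derives u' v') : g.Derives (u ++ u') (v ++ v') :=
  (Relation.ReflTransGen.lift (· ++ u')
      (fun _ _ ⟨r, hr, hrw⟩ => ⟨r, hr, hrw.append_right u'⟩) _ _ h).trans
    (Relation.ReflTransGen.lift (v ++ ·)
      (fun _ _ ⟨r, hr, hrw⟩ => ⟨r, hr, hrw.append_left v⟩) _ _ h')

inductive DerivesWord (g : ContextFreeGrammar.{uN} T) : List (Symbol T g.NT) → List T → Prop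
  | nil : DerivesWord g [] []
  | terminal (t : T) {α : List (Symbol T g.NT)} {w : List T} :
      DerivesWord g α w → DerivesWord g (.terminal t :: α) (t :: w)
  | nonterminal {r : ContextFreeRule T g.NT} {α : List (Symbol T g.NT)} {w₁ w₂ : List T} :
      r ∈ g.rules → DerivesWord g r.output w₁ → DerivesWord g α w₂ →
      DerivesWord g (.nonterminal r.input :: α) (w₁ ++ w₂)

end ContextFreeGrammar

variable {g : ContextFreeGrammar.{uN} T}

theorem derivesWord_map_terminal (w : List T) : g.DerivesWord (w.map .terminal) w := by
  induction w with
  | nil => exact .nil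
  | cons t w ih => exact .terminal t ih

theorem derivesWord_append_iff {α β : List (Symbol T g.NT)} {w : List T} :
    g.DerivesWord (α ++ β) w ↔
      ∃ w₁ w₂, w = w₁ ++ w₂ ∧ g.DerivesWord α w₁ ∧ g.DerivesWord β w₂ := by
  induction α generalizing w with
  | nil =>
    refine ⟨fun h => ⟨[], w, rfl, .nil, h⟩, ?_⟩
    rintro ⟨_, w, rfl, ⟨⟩, h⟩
    exact h
  | cons s α ih =>
    constructor
    · rintro (_ | ⟨t, h⟩ | ⟨hr, hout, h⟩)
      · obtain ⟨w₁, w₂, rfl, h₁, h₂⟩ := ih.mp h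
        exact ⟨t :: w₁, w₂, rfl, .terminal t h₁, h₂⟩
      · obtain ⟨w₁, w₂, rfl, h₁, h₂⟩ := ih.mp h
        exact ⟨_ ++ w₁, w₂, (List.append_assoc ..).symm, .nonterminal hr hout h₁, h₂⟩
    · rintro ⟨_, w₂, rfl, (_ | ⟨t, h₁⟩ | ⟨hr, hout, h₁⟩), h₂⟩
      · exact .terminal t (ih.mpr ⟨_, w₂, rfl, h₁, h₂⟩)
      · rw [List.append_assoc]
        exact .nonterminal hr hout (ih.mpr ⟨_, w₂, rfl, h₁, h₂⟩)

theorem ContextFreeGrammar.DerivesWord.of_rewrites {r : ContextFreeRule T g.NT} (hr : r ∈ g.rules)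
    {α β : List (Symbol T g.NT)} (hαβ : r.Rewrites α β) {w : List T}
    (h : g.DerivesWord β w) : g.DerivesWord α w := by
  induction hαβ generalizing w with
  | head s =>
    obtain ⟨w₁, w₂, rfl, h₁, h₂⟩ := derivesWord_append_iff.mp h
    exact .nonterminal hr h₁ h₂
  | cons x _ ih =>
    rcases h with _ | ⟨t, h⟩ | ⟨hr', hout, h⟩
    · exact .terminal t (ih h)
    · exact .nonterminal hr' hout (ih h)

theorem ContextFreeGrammar.DerivesWord.derives {α : List (Symbol T g.NT)} {w : List T}
    (h : g.DerivesWord α w) :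
    g.Derives α (w.map .terminal) := by
  induction h with
  | nil => exact .refl
  | terminal t _ ih => exact ContextFreeGrammar.Derives.append (u := [.terminal t]) .refl ih
  | @nonterminal r _ _ _ hr _ _ ih₁ ih₂ =>
    rw [List.map_append]
    exact ContextFreeGrammar.Derives.append (u := [.nonterminal r.input])
      (.head ⟨r, hr, .input_output⟩ ih₁) ih₂

theorem derivesWord_iff_derives {α : List (Symbol T g.NT)} {w : List T} :
    g.DerivesWord α w ↔ g.Derives α (w.map .terminal) := by
  refine ⟨ContextFreeGrammar.DerivesWord.derives, fun h => ?_⟩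
  induction h using Relation.ReflTransGen.head_induction_on with
  | refl => exact derivesWord_map_terminal w
  | head hstep _ ih =>
    obtain ⟨r, hr, hrw⟩ := hstep
    exact ih.of_rewrites hr hrw

theorem mem_language_iff_derivesWord {w : List T} :
    w ∈ g.language ↔ g.DerivesWord [.nonterminal g.initial] w :=
  derivesWord_iff_derives.symm

theorem mem_langFrom_iff_derivesWord {X : g.NT} {w : List T} :
    w ∈ langFrom g X ↔ g.DerivesWord [.nonterminal X] w :=
  derivesWord_iff_derives.symm

theorem substStr_append {α β : Type*} (f : α → Language β) (u v : List α) :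
    substStr f (u ++ v) = substStr f u * substStr f v := by
  induction u with
  | nil => exact (one_mul _).symm
  | cons c u ih => rw [List.cons_append, substStr, substStr, ih, mul_assoc]

theorem mem_substLang {α β : Type*} {f : α → Language β} {L : Language α} {w : List β} :
    w ∈ substLang f L ↔ ∃ u ∈ L, w ∈ substStr f u := by
  simp only [substLang, ← exists_prop]
  exact Set.mem_iUnion₂

def langSubst (g : ContextFreeGrammar.{uN} T) : T ⊕ g.NT → Language T :=
  Sum.elim (fun a => {[a]}) (langFrom g)

def backSym (g : ContextFreeGrammar.{uN} T) (X : g.NT) :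
    Symbol (T ⊕ g.NT) {Y : g.NT // SameComp g X Y} → Symbol T g.NT
  | .terminal (.inl t) => .terminal t
  | .terminal (.inr Y) => .nonterminal Y
  | .nonterminal Y => .nonterminal Y.1

theorem convSym_of_sameComp {X Y : g.NT} (h : SameComp g X Y) :
    convSym g X (.nonterminal Y) = .nonterminal ⟨Y, h⟩ :=
  dif_pos h

theorem convSym_of_not_sameComp {X Y : g.NT} (h : ¬ SameComp g X Y) :
    convSym g X (.nonterminal Y) = .terminal (.inr Y) :=
  dif_neg h

theorem backSym_convSym (X : g.NT) (s : Symbol T g.NT) : backSym g X (convSym g X s) = s := by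
  cases s with
  | terminal t => rfl
  | nonterminal Y =>
    by_cases h : SameComp g X Y
    · rw [convSym_of_sameComp h]; rfl
    · rw [convSym_of_not_sameComp h]; rfl

theorem map_backSym_map_convSym (X : g.NT) (l : List (Symbol T g.NT)) :
    (l.map (convSym g X)).map (backSym g X) = l := by
  simp [Function.comp_def, backSym_convSym]

open scoped Classical in
theorem mem_defSub_rules {X : g.NT}
    {r' : ContextFreeRule (T ⊕ g.NT) {Y : g.NT // SameComp g X Y}} :
    r' ∈ (defSub g X).rules ↔ ∃ r ∈ g.rules, ∃ h : SameComp g X r.input,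
      r' = ⟨⟨r.input, h⟩, r.output.map (convSym g X)⟩ := by
  refine ⟨fun hr' => ?_, ?_⟩
  · obtain ⟨r, hr, he⟩ := List.mem_filterMap.mp (List.mem_toFinset.mp hr')
    split_ifs at he with h
    exact ⟨r, Finset.mem_toList.mp hr, h, (Option.some.inj he).symm⟩
  · rintro ⟨r, hr, h, rfl⟩
    exact List.mem_toFinset.mpr
      (List.mem_filterMap.mpr ⟨r, Finset.mem_toList.mpr hr, dif_pos h⟩)

-- `(defSub g X).NT` is `{Y // SameComp g X Y}` only after unfolding `defSub`, which `rw` and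
-- `simp` do not do: `convSym`-images inside `(defSub g X).DerivesWord` are reshaped by `show`,
-- `change` and `convert` instead (here and below).
theorem ContextFreeGrammar.DerivesWord.exists_defSub {X : g.NT} {α : List (Symbol T g.NT)}
    {w : List T} (h : g.DerivesWord α w) :
    ∃ u, (defSub g X).DerivesWord (α.map (convSym g X)) u ∧
      w ∈ substStr (langSubst g) u := by
  induction h with
  | nil => exact ⟨[], .nil, rfl⟩
  | terminal t _ ih =>
    obtain ⟨u, hu, hwu⟩ := ih
    exact ⟨.inl t :: u, by exact .terminal (.inl t) hu,
      Language.append_mem_mul (Set.mem_singleton [t]) hwu⟩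
  | @nonterminal r α w₁ _ hr hout _ ih₁ ih₂ =>
    obtain ⟨u₁, hu₁, hwu₁⟩ := ih₁
    obtain ⟨u₂, hu₂, hwu₂⟩ := ih₂
    show ∃ u, (defSub g X).DerivesWord
      (convSym g X (.nonterminal r.input) :: α.map (convSym g X)) u ∧ _
    by_cases hc : SameComp g X r.input
    · refine ⟨u₁ ++ u₂, ?_, ?_⟩
      · rw [convSym_of_sameComp hc]
        exact .nonterminal (r := ⟨_, r.output.map (convSym g X)⟩)
          (mem_defSub_rules.mpr ⟨r, hr, hc, rfl⟩) hu₁ hu₂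
      · rw [substStr_append]
        exact Language.append_mem_mul hwu₁ hwu₂
    · refine ⟨.inr r.input :: u₂, ?_, ?_⟩
      · rw [convSym_of_not_sameComp hc]
        exact .terminal _ hu₂
      · have hw₁ : w₁ ∈ langFrom g r.input := by
          rw [mem_langFrom_iff_derivesWord, ← List.append_nil w₁]
          exact .nonterminal hr hout .nil
        exact Language.append_mem_mul hw₁ hwu₂

theorem ContextFreeGrammar.DerivesWord.backSym_of_defSub {X : g.NT}
    {α : List (Symbol (T ⊕ g.NT) (defSub g X).NT)}
    {u : List (T ⊕ g.NT)} (h : (defSub g X).DerivesWord α u) {w : List T}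
    (hw : w ∈ substStr (langSubst g) u) : g.DerivesWord (α.map (backSym g X)) w := by
  induction h generalizing w with
  | nil => rw [(Language.mem_one w).mp hw]; exact .nil
  | terminal c _ ih =>
    obtain ⟨w₁, hw₁, w₂, hw₂, rfl⟩ := Language.mem_mul.mp hw
    cases c with
    | inl t =>
      rw [(Set.mem_singleton_iff.mp hw₁ : w₁ = [t])]
      exact .terminal t (ih hw₂)
    | inr Y =>
      exact derivesWord_append_iff (α := [_]).mpr
        ⟨w₁, w₂, rfl, mem_langFrom_iff_derivesWord.mp hw₁, ih hw₂⟩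
  | nonterminal hr' _ _ ih₁ ih₂ =>
    obtain ⟨r, hr, hc, rfl⟩ := mem_defSub_rules.mp hr'
    rw [substStr_append] at hw
    obtain ⟨w₁, hw₁, w₂, hw₂, rfl⟩ := Language.mem_mul.mp hw
    have hout : g.DerivesWord r.output w₁ := by
      convert ih₁ hw₁ using 1
      exact (map_backSym_map_convSym X r.output).symm
    exact .nonterminal hr hout (ih₂ hw₂)

theorem exists_mem_defSub_language_of_mem_langFrom {X : g.NT} {w : List T}
    (hw : w ∈ langFrom g X) :
    ∃ u ∈ (defSub g X).language, w ∈ substStr (langSubst g) u := by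
  obtain ⟨u, hu, hwu⟩ := (mem_langFrom_iff_derivesWord.mp hw).exists_defSub (X := X)
  refine ⟨u, mem_language_iff_derivesWord.mpr ?_, hwu⟩
  change (defSub g X).DerivesWord [convSym g X (.nonterminal X)] u at hu
  rwa [convSym_of_sameComp (.intro .refl .refl)] at hu

theorem mem_langFrom_of_mem_defSub_language {X : g.NT} {u : List (T ⊕ g.NT)} {w : List T}
    (hu : u ∈ (defSub g X).language) (hwu : w ∈ substStr (langSubst g) u) :
    w ∈ langFrom g X :=
  mem_langFrom_iff_derivesWord.mpr ((mem_language_iff_derivesWord.mp hu).backSym_of_defSub hwu)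

end LRApprox

open LRApprox

/-- For a CFG `G` and a nonterminal `X`, the language
`L_G(X)` equals the image of `L(def(X))` under the substitution mapping each
terminal `a ∈ Σ` to `{a}` and each pseudoterminal `Y` to `L_G(Y)`. -/
theorem defsub_substitution {T : Type*} (g : LRApprox.ContextFreeGrammar T) :
    ∀ X : g.NT,
      langFrom g X =
        substLang (Sum.elim (fun a : T => ({[a]} : Language T)) (langFrom g))
          (defSub g X).language := by
  intro X
  ext w
  rw [mem_substLang]
  exact ⟨exists_mem_defSub_language_of_mem_langFrom,
    fun ⟨_, hu, hwu⟩ => mem_langFrom_of_mem_defSub_language hu hwu⟩
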